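/- Let (D_λ)_{λ∈Λ} be a family of nontrivial commutative rings such that for every λ ∈ Λ and every r ∈ D_λ, either r is contained in all maximal ideals of D_λ or r is contained in only finitely many maximal ideals of D_λ. Let U be an ultrafilter in B containing an element Y = (Y_λ)_{λ∈Λ} such that Y_λ is a finite set for every λ ∈ Λ. Then (U) = {a ∈ R | S(a) ∈ U} is a maximal ideal of R = ∏_{λ∈Λ} D_λ. -/

import Mathlib

/-!
Common setup: `Λ` is an index set, `D λ` a family of commutative rings,
`R = ∏ λ, D λ` the product ring, and
`B = ∏ λ, P(max (D λ))` the product Boolean algebra of the power sets of the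
sets of maximal ideals, realized as the Pi type `∀ l, Set (MaximalSpectrum (D l))`
with its componentwise Boolean algebra structure (meet = componentwise ∩,
join = componentwise ∪, `⊥ = (∅)_λ`, complement componentwise, order = componentwise ⊆).
-/

variable {Λ : Type*} {D : Λ → Type*}

/-- `S(a) = (V(a_λ))_λ ∈ B`, where `V(x)` is the set of maximal ideals containing `x`. -/
def SFam [∀ l, CommRing (D l)] (a : ∀ l, D l) : ∀ l, Set (MaximalSpectrum (D l)) :=
  fun l => {P | a l ∈ P.asIdeal}

/-- `z(x) = {λ | x_λ = 0}`. -/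
def ZFam [∀ l, CommRing (D l)] (x : ∀ l, D l) : Set Λ := {l | x l = 0}

/-- A filter in a Boolean algebra: a nonempty subset not containing `⊥`, closed
under meets, and upward closed. -/
def IsBFilter {B : Type*} [BooleanAlgebra B] (U : Set B) : Prop :=
  U.Nonempty ∧ ⊥ ∉ U ∧ (∀ X ∈ U, ∀ Y ∈ U, X ⊓ Y ∈ U) ∧ (∀ Y ∈ U, ∀ Z, Y ≤ Z → Z ∈ U)

/-- An ultrafilter in a Boolean algebra: a filter containing `Y` or `Yᶜ` for every `Y`. -/
def IsBUltrafilter {B : Type*} [BooleanAlgebra B] (U : Set B) : Prop :=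
  IsBFilter U ∧ ∀ Y, Y ∈ U ∨ Yᶜ ∈ U

/-- Property (+): for all `r` and all nonzero `a` there is `d` lying in every maximal
ideal containing `a` but not `r`, and in no maximal ideal containing `r`. -/
def PropertyPlus (A : Type*) [CommRing A] : Prop :=
  ∀ r a : A, a ≠ 0 → ∃ d : A,
    (∀ M : Ideal A, M.IsMaximal → a ∈ M → r ∉ M → d ∈ M) ∧
    (∀ M : Ideal A, M.IsMaximal → r ∈ M → d ∉ M)

/-- Property (++): for every `r` there is `d` with `D(r) = V(d)`, i.e. the maximal
ideals containing `d` are exactly those not containing `r`. -/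
def PropertyPlusPlus (A : Type*) [CommRing A] : Prop :=
  ∀ r : A, ∃ d : A, ∀ P : MaximalSpectrum A, d ∈ P.asIdeal ↔ r ∉ P.asIdeal

/-!
`(U)` is an ideal because `V(a + b) ⊇ V(a) ∩ V(b)` and `V(c a) ⊇ V(a)`, and it is proper
because `S(1) = 0_B`. For maximality take `x ∉ (U)`; as `U` is an ultrafilter, the complement
`¬S(x)` lies in `U`. Each `Y_λ \ V(x_λ)` is a finite set of maximal ideals avoiding `x_λ`, so the
Chinese remainder theorem gives `r_λ` with `1 - r_λ x_λ` in all of them. Then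
`S(1 - r x) ≥ Y ∧ ¬S(x) ∈ U`, i.e. `x` is invertible modulo `(U)`.
-/

theorem exists_one_sub_mul_mem_of_finite {A : Type*} [CommRing A] {a : A}
    {F : Set (MaximalSpectrum A)} (hF : F.Finite) (ha : ∀ P ∈ F, a ∉ P.asIdeal) :
    ∃ r : A, ∀ P ∈ F, 1 - r * a ∈ P.asIdeal := by
  have hcoprime : Ideal.span {a} ⊔ ⨅ P ∈ hF.toFinset, P.asIdeal = ⊤ := by
    refine Ideal.sup_iInf_eq_top fun P hP => (Ideal.eq_top_iff_one _).2 ?_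
    exact (Ideal.isMaximal_iff.1 P.isMaximal).2 _ a le_sup_right (ha P (hF.mem_toFinset.1 hP))
      (Ideal.mem_sup_left (Ideal.mem_span_singleton_self a))
  obtain ⟨r, m, hm, hrm⟩ :=
    Ideal.mem_span_singleton_sup.1 ((Ideal.eq_top_iff_one _).1 hcoprime)
  refine ⟨r, fun P hP => ?_⟩
  rw [← hrm, add_sub_cancel_left]
  simp only [Submodule.mem_iInf, Set.Finite.mem_toFinset] at hm
  exact hm P hP

namespace IsBFilter

variable {B : Type*} [BooleanAlgebra B] {U : Set B}

theorem bot_notMem (hU : IsBFilter U) : ⊥ ∉ U := hU.2.1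

theorem inf_mem (hU : IsBFilter U) {X Y : B} (hX : X ∈ U) (hY : Y ∈ U) : X ⊓ Y ∈ U :=
  hU.2.2.1 X hX Y hY

theorem mono (hU : IsBFilter U) {Y Z : B} (hY : Y ∈ U) (hYZ : Y ≤ Z) : Z ∈ U :=
  hU.2.2.2 Y hY Z hYZ

theorem top_mem (hU : IsBFilter U) : ⊤ ∈ U :=
  let ⟨_, hY⟩ := hU.1
  hU.mono hY le_top

end IsBFilter

section ProductRing

variable [∀ l, CommRing (D l)]

@[simp]
theorem sFam_zero : SFam (0 : ∀ l, D l) = ⊤ := by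
  funext l
  ext P
  simp [SFam]

@[simp]
theorem sFam_one : SFam (1 : ∀ l, D l) = ⊥ := by
  funext l
  ext P
  simp [SFam, (Ideal.ne_top_iff_one _).1 P.isMaximal.ne_top]

theorem sFam_inf_le_sFam_add (a b : ∀ l, D l) : SFam a ⊓ SFam b ≤ SFam (a + b) :=
  fun _ P hP => P.asIdeal.add_mem hP.1 hP.2

theorem sFam_le_sFam_mul (c a : ∀ l, D l) : SFam a ≤ SFam (c * a) :=
  fun l P hP => P.asIdeal.mul_mem_left (c l) hP

variable {U : Set (∀ l, Set (MaximalSpectrum (D l)))}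

def IsBFilter.ideal (hU : IsBFilter U) : Ideal (∀ l, D l) where
  carrier := {a | SFam a ∈ U}
  zero_mem' := by
    change SFam 0 ∈ U
    simpa using hU.top_mem
  add_mem' ha hb := hU.mono (hU.inf_mem ha hb) (sFam_inf_le_sFam_add _ _)
  smul_mem' c _ ha := hU.mono ha (sFam_le_sFam_mul c _)

theorem IsBFilter.mem_ideal (hU : IsBFilter U) {a : ∀ l, D l} : a ∈ hU.ideal ↔ SFam a ∈ U :=
  Iff.rfl

theorem IsBFilter.one_notMem_ideal (hU : IsBFilter U) : (1 : ∀ l, D l) ∉ hU.ideal := by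
  rw [hU.mem_ideal, sFam_one]
  exact hU.bot_notMem

theorem IsBUltrafilter.exists_one_sub_mul_mem_ideal (hU : IsBUltrafilter U)
    {Y : ∀ l, Set (MaximalSpectrum (D l))} (hYU : Y ∈ U) (hYfin : ∀ l, (Y l).Finite)
    {x : ∀ l, D l} (hx : x ∉ hU.1.ideal) : ∃ r, 1 - r * x ∈ hU.1.ideal := by
  have hxc : (SFam x)ᶜ ∈ U := (hU.2 (SFam x)).resolve_left hx
  choose r hr using fun l =>
    exists_one_sub_mul_mem_of_finite ((hYfin l).sdiff (t := SFam x l)) fun _ hP => hP.2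
  exact ⟨r, hU.1.mono (hU.1.inf_mem hYU hxc) hr⟩

theorem IsBUltrafilter.isMaximal_ideal (hU : IsBUltrafilter U)
    (hY : ∃ Y ∈ U, ∀ l, (Y l).Finite) : hU.1.ideal.IsMaximal := by
  obtain ⟨Y, hYU, hYfin⟩ := hY
  refine Ideal.isMaximal_iff.2 ⟨hU.1.one_notMem_ideal, fun J x hIJ hx hxJ => ?_⟩
  obtain ⟨r, hr⟩ := hU.exists_one_sub_mul_mem_ideal hYU hYfin hx
  simpa using J.add_mem (hIJ hr) (J.mul_mem_left r hxJ)

end ProductRing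

theorem stmt_8_general [∀ l, CommRing (D l)]
    (U : Set (∀ l, Set (MaximalSpectrum (D l)))) (hU : IsBUltrafilter U)
    (hY : ∃ Y ∈ U, ∀ l, (Y l).Finite) :
    ∃ I : Ideal (∀ l, D l), (∀ r, r ∈ I ↔ SFam r ∈ U) ∧ I.IsMaximal :=
  ⟨hU.1.ideal, fun _ => hU.1.mem_ideal, hU.isMaximal_ideal hY⟩

/-- If in every `D l` each element lies in all maximal ideals or only in finitely many,
and `U` is an ultrafilter in `B` containing an element `Y` with all components finite,
then `(U)` is a maximal ideal of `R`. -/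
theorem stmt_8 [∀ l, CommRing (D l)] [∀ l, Nontrivial (D l)]
    (hfin : ∀ l, ∀ r : D l, (∀ M : Ideal (D l), M.IsMaximal → r ∈ M) ∨
      {P : MaximalSpectrum (D l) | r ∈ P.asIdeal}.Finite)
    (U : Set (∀ l, Set (MaximalSpectrum (D l)))) (hU : IsBUltrafilter U)
    (hY : ∃ Y ∈ U, ∀ l, (Y l).Finite) :
    ∃ I : Ideal (∀ l, D l), (∀ r, r ∈ I ↔ SFam r ∈ U) ∧ I.IsMaximal :=
  stmt_8_general U hU hY
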